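/- (Sharpness of the N^{−1/2} rate.) For every positive sequence (a_N) with a_N = o(N^{−1/2}) there exists ρ₀ ∈ Prob(ℝ) ∩ L^∞(ℝ) ∩ BV(ℝ) with ρ₀ ≤ 1, supp(ρ₀) ⊆ [−1,1], TV(ρ₀) ≤ 3, such that for every sequence of sorted particle families X^N = (x₀,…,x_N) with associated piecewise constant densities ρ̄^N, limsup_{N→∞} ‖ρ̄^N − ρ₀‖_{L¹(ℝ)}/a_N = ∞. -/

import Mathlib

open MeasureTheory Filter

/-- Piecewise constant density associated to sorted particles. -/
noncomputable def pcDensity (N : ℕ) (x : Fin (N + 1) → ℝ) : ℝ → ℝ :=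
  fun y => ∑ i : Fin N, Set.indicator (Set.Ioo (x i.castSucc) (x i.succ))
    (fun _ => 1 / (N * (x i.succ - x i.castSucc))) y

/-!
At scale `2^{-j}` the density `ρ₀` carries a comb: `C_j + 1` teeth of width `ℓ_j` and height
`h_j`, with `h_j ℓ_j = 1 / N_j`, separated by gaps of width `ℓ_j`. A particle density with `N_j`
cells cannot resolve such a gap: a cell on which `ρ̄` is below `h_j / 2` is longer than `2 ℓ_j`,
so it also covers a half-tooth next to the gap, where `ρ̄` would have to exceed `h_j / 2`. Hence
every gap costs an `L¹` error of at least `h_j ℓ_j / 4`, and the total error is at least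
`C_j / (4 N_j)`. Because `a_N √N → 0`, one can take `C_j > 4 j N_j a_{N_j}` and still have
`C_j² ≲ 4^{-j} N_j`, which makes the combs fit into disjoint dyadic intervals with summable
variation; the ratio of error to `a_{N_j}` then exceeds `j`.
-/

open Set Topology

lemma exists_notMem_lt_of_setIntegral_Ioo_lt {F : ℝ → ℝ} {a b c : ℝ} {s : Set ℝ}
    (hs : volume s = 0) (hab : a < b) (hF : IntegrableOn F (Ioo a b))
    (h : ∫ y in Ioo a b, F y < c * (b - a)) : ∃ y ∈ Ioo a b, y ∉ s ∧ F y < c := by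
  have hsI : volume.restrict (Ioo a b) s = 0 := Measure.restrict_apply_eq_zero' measurableSet_Ioo
    |>.2 (measure_mono_null inter_subset_left hs)
  have hI : volume.restrict (Ioo a b) (Ioo a b)ᶜ = 0 := by
    rw [Measure.restrict_apply' measurableSet_Ioo]; simp
  obtain ⟨y, hys, hy⟩ := exists_notMem_null_le_average (by simp [hab]) hF
    (measure_union_null hsI hI)
  refine ⟨y, not_not.1 fun h => hys (Or.inr h), fun h => hys (Or.inl h), hy.trans_lt ?_⟩
  rw [setAverage_eq, Real.volume_real_Ioo_of_le hab.le, smul_eq_mul, inv_mul_lt_iff₀ (by linarith)]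
  linarith

lemma eVariationOn_sub_le {α E : Type*} [LinearOrder α] [SeminormedAddCommGroup E]
    (f g : α → E) (s : Set α) :
    eVariationOn (f - g) s ≤ eVariationOn f s + eVariationOn g s := by
  refine iSup_le fun ⟨n, u, hu, us⟩ => ?_
  calc ∑ i ∈ Finset.range n, edist ((f - g) (u (i + 1))) ((f - g) (u i))
      ≤ ∑ i ∈ Finset.range n,
          (edist (f (u (i + 1))) (f (u i)) + edist (g (u (i + 1))) (g (u i))) :=
        Finset.sum_le_sum fun i _ => by
          simpa [sub_eq_add_neg] using edist_add_add_le (f (u (i + 1))) (-g (u (i + 1)))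
            (f (u i)) (-g (u i))
    _ ≤ eVariationOn f s + eVariationOn g s := by
        rw [Finset.sum_add_distrib]
        exact add_le_add (eVariationOn.sum_le (f := f) hu us) (eVariationOn.sum_le (f := g) hu us)

lemma Monotone.eVariationOn_le {α : Type*} [LinearOrder α] {f : α → ℝ} {m M : ℝ}
    (hf : Monotone f) (hm : ∀ y, m ≤ f y) (hM : ∀ y, f y ≤ M) :
    eVariationOn f univ ≤ ENNReal.ofReal (M - m) := by
  rw [eVariationOn.eq_biSup_inter_Icc]
  refine iSup₂_le fun p _ => ?_
  rw [(hf.monotoneOn univ).eVariationOn_eq trivial trivial]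
  exact ENNReal.ofReal_le_ofReal (by linarith [hM p.2, hm p.1])

lemma monotone_indicator_Ici_const {α : Type*} [Preorder α] {a : α} {c : ℝ} (hc : 0 ≤ c) :
    Monotone ((Ici a).indicator fun _ => c) := by
  intro y y' hyy
  by_cases hy : y ∈ Ici a
  · rw [indicator_of_mem hy, indicator_of_mem (mem_Ici.2 (mem_Ici.1 hy |>.trans hyy))]
  · rw [indicator_of_notMem hy]
    exact indicator_nonneg (fun _ _ => hc) y'

lemma hasSum_half_pow_add_two : HasSum (fun j : ℕ => (1 / 2 : ℝ) ^ (j + 2)) (1 / 2) := by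
  have h := hasSum_geometric_two.mul_right ((1 / 2 : ℝ) ^ 2)
  rw [show (2 : ℝ) * (1 / 2) ^ 2 = 1 / 2 by norm_num] at h
  simpa only [← pow_add] using h

section PcDensity

variable {N : ℕ} {x : Fin (N + 1) → ℝ}

lemma pcDensity_nonneg (y : ℝ) : 0 ≤ pcDensity N x y :=
  Finset.sum_nonneg fun i _ => indicator_nonneg (fun _ hy => by
    have := hy.1.trans hy.2
    positivity) y

lemma integrable_pcDensity : Integrable (pcDensity N x) :=
  integrable_finsetSum _ fun _ _ =>
    (integrable_indicator_iff measurableSet_Ioo).2 (integrableOn_const measure_Ioo_lt_top.ne)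

lemma pcDensity_eq_of_mem (hx : Monotone x) {k : Fin N} {y : ℝ}
    (hy : y ∈ Ioo (x k.castSucc) (x k.succ)) :
    pcDensity N x y = 1 / (N * (x k.succ - x k.castSucc)) := by
  rw [pcDensity, Fintype.sum_eq_single k, indicator_of_mem hy]
  intro i hik
  refine indicator_of_notMem (fun hi => ?_) _
  rcases hik.lt_or_gt with h | h
  · exact (hi.2.trans_le ((hx (Fin.succ_le_castSucc_iff.2 h)).trans hy.1.le)).false
  · exact (hy.2.trans_le ((hx (Fin.succ_le_castSucc_iff.2 h)).trans hi.1.le)).false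

lemma exists_mem_Ioo_of_pcDensity_ne_zero {y : ℝ} (hy : pcDensity N x y ≠ 0) :
    ∃ k : Fin N, y ∈ Ioo (x k.castSucc) (x k.succ) := by
  by_contra! h
  exact hy (Finset.sum_eq_zero fun k _ => indicator_of_notMem (h k) _)

lemma exists_mem_Ioo_of_notMem_range (hx : Monotone x) {w : ℝ} (hw : w ∉ range x)
    {i j : Fin (N + 1)} (hi : x i < w) (hj : w < x j) :
    ∃ k : Fin N, w ∈ Ioo (x k.castSucc) (x k.succ) := by
  classical
  let S := Finset.univ.filter fun m => w < x m
  have hS : S.Nonempty := ⟨j, by simpa [S] using hj⟩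
  have hmS : w < x (S.min' hS) := by simpa [S] using S.min'_mem hS
  have hm0 : S.min' hS ≠ 0 := fun h0 => (hmS.trans_le (h0 ▸ hx (Fin.zero_le i))).asymm hi
  obtain ⟨k, hk⟩ := Fin.exists_succ_eq.2 hm0
  refine ⟨k, lt_of_le_of_ne ?_ fun h => hw ⟨_, h⟩, hk ▸ hmS⟩
  by_contra! hlt
  have := S.min'_le k.castSucc (by simpa [S] using hlt)
  exact (Fin.castSucc_lt_succ (i := k)).not_ge (hk ▸ this)

lemma one_lt_mul_sub_of_pcDensity_dip (hx : Monotone x) {y z w t : ℝ} (hzw : z < w) (hwy : w < y)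
    (hw : w ∉ range x) (hz : t < pcDensity N x z) (hy : t < pcDensity N x y)
    (hwt : pcDensity N x w < t) : 1 < N * t * (y - z) := by
  have ht : 0 < t := (pcDensity_nonneg w).trans_lt hwt
  obtain ⟨kz, hkz⟩ := exists_mem_Ioo_of_pcDensity_ne_zero (ht.trans hz).ne'
  obtain ⟨ky, hky⟩ := exists_mem_Ioo_of_pcDensity_ne_zero (ht.trans hy).ne'
  obtain ⟨k, hk⟩ := exists_mem_Ioo_of_notMem_range hx hw (hkz.1.trans hzw) (hwy.trans hky.2)
  -- `pcDensity` is constant on the cell `k` around `w`, so this cell lies inside `[z, y]`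
  have hyk : x k.succ ≤ y := by
    by_contra! h
    linarith [pcDensity_eq_of_mem hx hk, pcDensity_eq_of_mem hx ⟨hk.1.trans hwy, h⟩]
  have hzk : z ≤ x k.castSucc := by
    by_contra! h
    linarith [pcDensity_eq_of_mem hx hk, pcDensity_eq_of_mem hx ⟨h, hzw.trans hk.2⟩]
  have hN : (0 : ℝ) < N := Nat.cast_pos.2 (Fin.pos k)
  rw [pcDensity_eq_of_mem hx hk, div_lt_iff₀ (mul_pos hN (by linarith [hk.1, hk.2]))] at hwt
  calc 1 < t * (N * (x k.succ - x k.castSucc)) := hwt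
    _ ≤ N * t * (y - z) := by nlinarith [mul_pos hN ht]

end PcDensity

section Comb

noncomputable def comb (s ℓ h : ℝ) (C : ℕ) (y : ℝ) : ℝ :=
  ∑ k ∈ Finset.range (C + 1), (Ico (s + 2 * k * ℓ) (s + 2 * k * ℓ + ℓ)).indicator (fun _ => h) y

noncomputable def staircase (s ℓ h : ℝ) (C : ℕ) (y : ℝ) : ℝ :=
  ∑ k ∈ Finset.range (C + 1), (Ici (s + 2 * k * ℓ)).indicator (fun _ => h) y

variable {s ℓ h : ℝ} {C : ℕ} {y : ℝ}

lemma comb_eq_of_mem {k : ℕ} (hℓ : 0 < ℓ) (hk : k ≤ C)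
    (hy : y ∈ Ico (s + 2 * k * ℓ) (s + 2 * k * ℓ + ℓ)) : comb s ℓ h C y = h := by
  rw [comb, Finset.sum_eq_single_of_mem k (Finset.mem_range.2 (Nat.lt_succ_of_le hk)),
    indicator_of_mem hy]
  intro i _ hik
  refine indicator_of_notMem (fun hi => ?_) _
  rcases hik.lt_or_gt with h | h
  · have : (i : ℝ) + 1 ≤ k := by exact_mod_cast h
    nlinarith [hi.2, hy.1]
  · have : (k : ℝ) + 1 ≤ i := by exact_mod_cast h
    nlinarith [hi.1, hy.2]

lemma comb_eq_zero_of_forall_notMem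
    (hy : ∀ k : ℕ, y ∉ Ico (s + 2 * k * ℓ) (s + 2 * k * ℓ + ℓ)) : comb s ℓ h C y = 0 :=
  Finset.sum_eq_zero fun k _ => indicator_of_notMem (hy k) _

lemma comb_eq_zero_of_mem_gap {k : ℕ} (hℓ : 0 < ℓ)
    (hy : y ∈ Ioo (s + 2 * k * ℓ + ℓ) (s + 2 * k * ℓ + 2 * ℓ)) : comb s ℓ h C y = 0 := by
  refine comb_eq_zero_of_forall_notMem fun i hi => ?_
  rcases le_or_gt i k with h | h
  · have : (i : ℝ) ≤ k := by exact_mod_cast h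
    nlinarith [hi.2, hy.1]
  · have : (k : ℝ) + 1 ≤ i := by exact_mod_cast h
    nlinarith [hi.1, hy.2]

lemma comb_eq_zero_of_notMem (hℓ : 0 < ℓ) (hy : y ∉ Ico s (s + (2 * C + 1) * ℓ)) :
    comb s ℓ h C y = 0 := by
  refine Finset.sum_eq_zero fun k hk => indicator_of_notMem (fun hk' => hy ⟨?_, ?_⟩) _
  · have : (0 : ℝ) ≤ k := k.cast_nonneg
    nlinarith [hk'.1]
  · have : (k : ℝ) ≤ C := by exact_mod_cast Nat.lt_succ_iff.1 (Finset.mem_range.1 hk)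
    nlinarith [hk'.2]

lemma comb_nonneg (hh : 0 ≤ h) : 0 ≤ comb s ℓ h C y :=
  Finset.sum_nonneg fun _ _ => indicator_nonneg (fun _ _ => hh) _

lemma comb_le (hℓ : 0 < ℓ) (hh : 0 ≤ h) : comb s ℓ h C y ≤ h := by
  by_cases hy : ∃ k ≤ C, y ∈ Ico (s + 2 * k * ℓ) (s + 2 * k * ℓ + ℓ)
  · obtain ⟨k, hk, hyk⟩ := hy
    exact (comb_eq_of_mem hℓ hk hyk).le
  · push Not at hy
    rw [comb, Finset.sum_eq_zero fun k hk =>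
      indicator_of_notMem (hy k (Nat.lt_succ_iff.1 (Finset.mem_range.1 hk))) _]
    exact hh

lemma measurable_comb : Measurable (comb s ℓ h C) :=
  Finset.measurable_sum _ fun _ _ => measurable_const.indicator measurableSet_Ico

lemma integrable_comb : Integrable (comb s ℓ h C) :=
  integrable_finsetSum _ fun _ _ =>
    (integrable_indicator_iff measurableSet_Ico).2 (integrableOn_const measure_Ico_lt_top.ne)

lemma integral_comb (hℓ : 0 ≤ ℓ) : ∫ y, comb s ℓ h C y = (C + 1) * (h * ℓ) := by
  unfold comb
  rw [integral_finsetSum _ fun _ _ =>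
    (integrable_indicator_iff measurableSet_Ico).2 (integrableOn_const measure_Ico_lt_top.ne)]
  simp only [integral_indicator_const _ measurableSet_Ico]
  simp [hℓ, mul_comm]

lemma comb_eq_staircase_sub (hℓ : 0 ≤ ℓ) :
    comb s ℓ h C y = staircase s ℓ h C y - staircase (s + ℓ) ℓ h C y := by
  rw [comb, staircase, staircase, ← Finset.sum_sub_distrib]
  refine Finset.sum_congr rfl fun k _ => ?_
  rw [add_right_comm, ← Ici_sdiff_Ici, indicator_sdiff (Ici_subset_Ici.2 (by linarith)),
    Pi.sub_apply]

lemma monotone_staircase (hh : 0 ≤ h) : Monotone (staircase s ℓ h C) := fun _ _ hyy =>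
  Finset.sum_le_sum fun _ _ => monotone_indicator_Ici_const hh hyy

lemma staircase_nonneg (hh : 0 ≤ h) : 0 ≤ staircase s ℓ h C y :=
  Finset.sum_nonneg fun _ _ => indicator_nonneg (fun _ _ => hh) _

lemma staircase_le (hh : 0 ≤ h) : staircase s ℓ h C y ≤ (C + 1) * h := by
  calc staircase s ℓ h C y ≤ ∑ _k ∈ Finset.range (C + 1), h :=
        Finset.sum_le_sum fun _ _ => indicator_le_self' (fun _ _ => hh) _
    _ = (C + 1) * h := by simp

end Comb

section WindowBound

variable {N : ℕ} {x : Fin (N + 1) → ℝ}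

lemma mul_div_four_le_setIntegral_abs_pcDensity_sub (hx : Monotone x) {ρ : ℝ → ℝ} {p ℓ h : ℝ}
    (hℓ : 0 < ℓ) (hN : N * (h * ℓ) ≤ 1) (hint : Integrable ρ)
    (hleft : ∀ y ∈ Ioo (p + ℓ / 2) (p + ℓ), ρ y = h)
    (hgap : ∀ y ∈ Ioo (p + ℓ) (p + 2 * ℓ), ρ y = 0)
    (hright : ∀ y ∈ Ioo (p + 2 * ℓ) (p + 5 * ℓ / 2), ρ y = h) :
    h * ℓ / 4 ≤ ∫ y in Ioo (p + ℓ / 2) (p + 5 * ℓ / 2), |pcDensity N x y - ρ y| := by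
  by_contra! H
  have hFint : IntegrableOn (fun y => |pcDensity N x y - ρ y|) (Ioo (p + ℓ / 2) (p + 5 * ℓ / 2)) :=
    (integrable_pcDensity.sub hint).abs.integrableOn
  have hh : 0 < h := by
    have := setIntegral_nonneg (μ := volume) (measurableSet_Ioo (a := p + ℓ / 2)
      (b := p + 5 * ℓ / 2)) fun y _ => abs_nonneg (pcDensity N x y - ρ y)
    nlinarith
  -- A small error puts `pcDensity` above `h / 2` somewhere on both half-teeth and below `h / 2`
  -- at a non-particle point of the gap; such a dip needs points more than `2 / (N h) ≥ 2 ℓ` apart.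
  have hpoint : ∀ (a b : ℝ) {s : Set ℝ}, volume s = 0 → p + ℓ / 2 ≤ a → b ≤ p + 5 * ℓ / 2 →
      ℓ / 2 ≤ b - a → ∃ y ∈ Ioo a b, y ∉ s ∧ |pcDensity N x y - ρ y| < h / 2 := by
    intro a b s hs ha hb hba
    refine exists_notMem_lt_of_setIntegral_Ioo_lt hs (by linarith)
      (hFint.mono_set (Ioo_subset_Ioo ha hb)) ?_
    calc ∫ y in Ioo a b, |pcDensity N x y - ρ y|
        ≤ ∫ y in Ioo (p + ℓ / 2) (p + 5 * ℓ / 2), |pcDensity N x y - ρ y| :=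
          setIntegral_mono_set hFint (ae_of_all _ fun _ => abs_nonneg _)
            (Ioo_subset_Ioo ha hb).eventuallyLE
      _ < h * ℓ / 4 := H
      _ ≤ h / 2 * (b - a) := by nlinarith
  obtain ⟨z, hz, -, hFz⟩ := hpoint (p + ℓ / 2) (p + ℓ) measure_empty le_rfl (by linarith)
    (by linarith)
  obtain ⟨w, hw, hwx, hFw⟩ := hpoint (p + ℓ) (p + 2 * ℓ) ((finite_range x).measure_zero volume)
    (by linarith) (by linarith) (by linarith)
  obtain ⟨y, hy, -, hFy⟩ := hpoint (p + 2 * ℓ) (p + 5 * ℓ / 2) measure_empty (by linarith) le_rfl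
    (by linarith)
  rw [hleft z hz] at hFz
  rw [hgap w hw, sub_zero] at hFw
  rw [hright y hy] at hFy
  have hdip := one_lt_mul_sub_of_pcDensity_dip hx (hz.2.trans hw.1) (hw.2.trans hy.1) hwx
    (by linarith [(abs_lt.1 hFz).1]) (by linarith [(abs_lt.1 hFy).1]) (lt_of_abs_lt hFw)
  have : (N : ℝ) * (h / 2) * (y - z) ≤ N * (h * ℓ) := by
    have : (0 : ℝ) ≤ N * (h / 2) := by positivity
    nlinarith [hz.1, hy.2]
  linarith

lemma natCast_mul_le_integral_abs_pcDensity_sub_of_eqOn_comb (hx : Monotone x) {ρ : ℝ → ℝ}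
    {s ℓ h : ℝ} {C : ℕ} (hℓ : 0 < ℓ) (hN : N * (h * ℓ) ≤ 1) (hint : Integrable ρ)
    (hρ : EqOn ρ (comb s ℓ h C) (Ico s (s + (2 * C + 1) * ℓ))) :
    C * (h * ℓ / 4) ≤ ∫ y, |pcDensity N x y - ρ y| := by
  set W : ℕ → Set ℝ := fun k => Ioo (s + 2 * k * ℓ + ℓ / 2) (s + 2 * k * ℓ + 5 * ℓ / 2)
  have hF : Integrable fun y => |pcDensity N x y - ρ y| := (integrable_pcDensity.sub hint).abs
  have hwindow : ∀ k ∈ Finset.range C, h * ℓ / 4 ≤ ∫ y in W k, |pcDensity N x y - ρ y| := by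
    intro k hk
    have hkC : k < C := Finset.mem_range.1 hk
    have hkC' : (k : ℝ) + 1 ≤ C := by exact_mod_cast hkC
    have hk0 : (0 : ℝ) ≤ k := k.cast_nonneg
    have hW : ∀ y ∈ W k, ρ y = comb s ℓ h C y := fun y hy =>
      hρ ⟨by nlinarith [hy.1], by nlinarith [hy.2]⟩
    refine mul_div_four_le_setIntegral_abs_pcDensity_sub hx hℓ hN hint (fun y hy => ?_)
      (fun y hy => ?_) (fun y hy => ?_)
    · rw [hW y ⟨hy.1, by linarith [hy.2]⟩]
      exact comb_eq_of_mem hℓ hkC.le ⟨by linarith [hy.1], hy.2⟩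
    · rw [hW y ⟨by linarith [hy.1], by linarith [hy.2]⟩]
      exact comb_eq_zero_of_mem_gap hℓ hy
    · rw [hW y ⟨by linarith [hy.1], hy.2⟩]
      exact comb_eq_of_mem (k := k + 1) hℓ hkC ⟨by push_cast; linarith [hy.1],
        by push_cast; linarith [hy.2]⟩
  have hdisj_of_lt : ∀ k k' : ℕ, k < k' → Disjoint (W k) (W k') := by
    intro k k' hlt
    have : (k : ℝ) + 1 ≤ k' := by exact_mod_cast hlt
    exact disjoint_left.2 fun y hy hy' => by nlinarith [hy.2, hy'.1]
  have hdisj : (↑(Finset.range C) : Set ℕ).Pairwise (Function.onFun Disjoint W) :=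
    fun k _ k' _ hkk' => hkk'.lt_or_gt.elim (hdisj_of_lt k k') fun h => (hdisj_of_lt k' k h).symm
  calc (C : ℝ) * (h * ℓ / 4) = ∑ _k ∈ Finset.range C, h * ℓ / 4 := by simp
    _ ≤ ∑ k ∈ Finset.range C, ∫ y in W k, |pcDensity N x y - ρ y| := Finset.sum_le_sum hwindow
    _ = ∫ y in ⋃ k ∈ Finset.range C, W k, |pcDensity N x y - ρ y| :=
        (integral_biUnion_finset _ (fun _ _ => measurableSet_Ioo) hdisj
          fun _ _ => hF.integrableOn).symm
    _ ≤ ∫ y, |pcDensity N x y - ρ y| :=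
        setIntegral_le_integral hF (ae_of_all _ fun _ => abs_nonneg _)

end WindowBound

structure CombFamily where
  C : ℕ → ℕ
  width : ℕ → ℝ
  height : ℕ → ℝ
  width_pos : ∀ j, 0 < width j
  height_nonneg : ∀ j, 0 ≤ height j
  span_le : ∀ j, (2 * C j + 1) * width j ≤ (1 / 2) ^ (j + 1)
  weight_le : ∀ j, (C j + 1) * height j ≤ (1 / 2) ^ (j + 2)

namespace CombFamily

variable (F : CombFamily)

noncomputable def block (j : ℕ) : ℝ → ℝ :=
  comb ((1 / 2) ^ (j + 1)) (F.width j) (F.height j) (F.C j)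

noncomputable def mass (j : ℕ) : ℝ := (F.C j + 1) * (F.height j * F.width j)

/-- Block `j` occupies `[2^{-j-1}, 2^{-j})`; the constant on `[-1, 0)` restores unit mass. -/
noncomputable def density (y : ℝ) : ℝ :=
  (Ico (-1) 0).indicator (fun _ => 1 - ∑' j, F.mass j) y + ∑' j, F.block j y

lemma block_nonneg (j : ℕ) (y : ℝ) : 0 ≤ F.block j y := comb_nonneg (F.height_nonneg j)

lemma block_le (j : ℕ) (y : ℝ) : F.block j y ≤ (1 / 2) ^ (j + 2) := by
  refine (comb_le (F.width_pos j) (F.height_nonneg j)).trans ((le_mul_of_one_le_left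
    (F.height_nonneg j) ?_).trans (F.weight_le j))
  linarith [(F.C j).cast_nonneg (α := ℝ)]

lemma block_eq_zero_of_notMem {j : ℕ} {y : ℝ} (hy : y ∉ Ico ((1 / 2 : ℝ) ^ (j + 1)) ((1 / 2) ^ j)) :
    F.block j y = 0 := by
  refine comb_eq_zero_of_notMem (F.width_pos j) fun hy' => hy ⟨hy'.1, hy'.2.trans_le ?_⟩
  calc (1 / 2 : ℝ) ^ (j + 1) + (2 * F.C j + 1) * F.width j
      ≤ (1 / 2) ^ (j + 1) + (1 / 2) ^ (j + 1) := by linarith [F.span_le j]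
    _ = (1 / 2) ^ j := by ring

lemma summable_block (y : ℝ) : Summable fun j => F.block j y :=
  .of_nonneg_of_le (F.block_nonneg · y) (F.block_le · y) hasSum_half_pow_add_two.summable

lemma tsum_block_nonneg (y : ℝ) : 0 ≤ ∑' j, F.block j y := tsum_nonneg (F.block_nonneg · y)

lemma tsum_block_le (y : ℝ) : ∑' j, F.block j y ≤ 1 / 2 :=
  hasSum_le (F.block_le · y) (F.summable_block y).hasSum hasSum_half_pow_add_two

lemma tsum_block_eq_of_mem {j : ℕ} {y : ℝ} (hy : y ∈ Ico ((1 / 2 : ℝ) ^ (j + 1)) ((1 / 2) ^ j)) :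
    ∑' i, F.block i y = F.block j y := by
  refine tsum_eq_single j fun i hij => F.block_eq_zero_of_notMem fun hi => ?_
  rcases hij.lt_or_gt with h | h
  · have : (1 / 2 : ℝ) ^ j ≤ (1 / 2) ^ (i + 1) := pow_le_pow_of_le_one (by norm_num) (by norm_num) h
    linarith [hy.2, hi.1]
  · have : (1 / 2 : ℝ) ^ i ≤ (1 / 2) ^ (j + 1) := pow_le_pow_of_le_one (by norm_num) (by norm_num) h
    linarith [hy.1, hi.2]

lemma tsum_block_eq_zero_of_notMem {y : ℝ} (hy : y ∉ Icc (0 : ℝ) 1) : ∑' j, F.block j y = 0 := by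
  have h0 : ∀ j, F.block j y = 0 := fun j => F.block_eq_zero_of_notMem fun hj =>
    hy ⟨(pow_pos (by norm_num) _).le.trans hj.1,
      hj.2.le.trans (pow_le_one₀ (by norm_num) (by norm_num))⟩
  simp [h0]

lemma integral_block (j : ℕ) : ∫ y, F.block j y = F.mass j :=
  integral_comb (F.width_pos j).le

lemma mass_nonneg (j : ℕ) : 0 ≤ F.mass j :=
  mul_nonneg (by positivity) (mul_nonneg (F.height_nonneg j) (F.width_pos j).le)

lemma mass_le (j : ℕ) : F.mass j ≤ (1 / 2) ^ (j + 2) := by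
  have hℓ : F.width j ≤ 1 :=
    (le_mul_of_one_le_left (F.width_pos j).le (by linarith [(F.C j).cast_nonneg (α := ℝ)])).trans
      ((F.span_le j).trans (pow_le_one₀ (by norm_num) (by norm_num)))
  calc F.mass j = (F.C j + 1) * F.height j * F.width j := (mul_assoc _ _ _).symm
    _ ≤ (1 / 2) ^ (j + 2) * 1 := mul_le_mul (F.weight_le j) hℓ (F.width_pos j).le (by positivity)
    _ = (1 / 2) ^ (j + 2) := mul_one _

lemma summable_mass : Summable F.mass :=
  .of_nonneg_of_le F.mass_nonneg F.mass_le hasSum_half_pow_add_two.summable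

lemma tsum_mass_le : ∑' j, F.mass j ≤ 1 / 2 :=
  hasSum_le F.mass_le F.summable_mass.hasSum hasSum_half_pow_add_two

lemma one_sub_tsum_mass_nonneg : 0 ≤ 1 - ∑' j, F.mass j := by
  linarith [F.tsum_mass_le]

lemma one_sub_tsum_mass_le_one : 1 - ∑' j, F.mass j ≤ 1 := by
  linarith [tsum_nonneg F.mass_nonneg (L := .unconditional ℕ)]

lemma density_eq_block_of_mem {j : ℕ} {y : ℝ}
    (hy : y ∈ Ico ((1 / 2 : ℝ) ^ (j + 1)) ((1 / 2) ^ j)) : F.density y = F.block j y := by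
  have hy0 : y ∉ Ico (-1 : ℝ) 0 := fun h => (pow_pos (by norm_num : (0 : ℝ) < 1 / 2) _).not_ge
    (hy.1.trans h.2.le)
  rw [density, indicator_of_notMem hy0, zero_add, F.tsum_block_eq_of_mem hy]

lemma density_nonneg (y : ℝ) : 0 ≤ F.density y :=
  add_nonneg (indicator_nonneg (fun _ _ => F.one_sub_tsum_mass_nonneg) _) (F.tsum_block_nonneg y)

lemma density_le_one (y : ℝ) : F.density y ≤ 1 := by
  by_cases hy : y ∈ Ico (-1 : ℝ) 0
  · rw [density, indicator_of_mem hy, F.tsum_block_eq_zero_of_notMem fun h => hy.2.not_ge h.1,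
      add_zero]
    exact F.one_sub_tsum_mass_le_one
  · rw [density, indicator_of_notMem hy]
    linarith [F.tsum_block_le y]

lemma support_density_subset : Function.support F.density ⊆ Icc (-1) 1 := by
  intro y hy
  by_contra hy'
  refine hy ?_
  rw [density, indicator_of_notMem fun h => hy' ⟨h.1, h.2.le.trans zero_le_one⟩,
    F.tsum_block_eq_zero_of_notMem fun h => hy' ⟨by linarith [h.1], h.2⟩, add_zero]

lemma measurable_density : Measurable F.density :=
  (measurable_const.indicator measurableSet_Ico).add (Measurable.tsum fun _ => measurable_comb)

lemma integrable_tsum_block : Integrable fun y => ∑' j, F.block j y := by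
  have hsupp : Function.support (fun y => ∑' j, F.block j y) ⊆ Icc 0 1 := fun y hy =>
    not_not.1 fun h => hy (F.tsum_block_eq_zero_of_notMem h)
  refine (integrableOn_iff_integrable_of_support_subset hsupp).1
    (Measure.integrableOn_of_bounded (M := 1 / 2) measure_Icc_lt_top.ne
      (Measurable.tsum fun _ => measurable_comb).aestronglyMeasurable (ae_of_all _ fun y => ?_))
  rw [Real.norm_of_nonneg (F.tsum_block_nonneg y)]
  exact F.tsum_block_le y

lemma integrable_density : Integrable F.density :=
  ((integrable_indicator_iff measurableSet_Ico).2
    (integrableOn_const measure_Ico_lt_top.ne)).add F.integrable_tsum_block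

lemma integral_density : ∫ y, F.density y = 1 := by
  have hblocks : ∫ y, ∑' j, F.block j y = ∑' j, F.mass j := by
    rw [← integral_tsum_of_summable_integral_norm (F := F.block) (fun _ => integrable_comb)]
    · exact tsum_congr F.integral_block
    · refine F.summable_mass.congr fun j => ?_
      rw [← F.integral_block]
      exact integral_congr_ae (ae_of_all _ fun y => (Real.norm_of_nonneg (F.block_nonneg j y)).symm)
  unfold density
  rw [integral_add ((integrable_indicator_iff measurableSet_Ico).2
    (integrableOn_const measure_Ico_lt_top.ne)) F.integrable_tsum_block, hblocks,
    integral_indicator_const _ measurableSet_Ico]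
  simp

noncomputable def staircases (o : ℕ → ℝ) (y : ℝ) : ℝ :=
  ∑' j, staircase (o j) (F.width j) (F.height j) (F.C j) y

lemma summable_staircase (o : ℕ → ℝ) (y : ℝ) :
    Summable fun j => staircase (o j) (F.width j) (F.height j) (F.C j) y :=
  .of_nonneg_of_le (fun j => staircase_nonneg (F.height_nonneg j))
    (fun j => (staircase_le (F.height_nonneg j)).trans (F.weight_le j))
    hasSum_half_pow_add_two.summable

lemma monotone_staircases (o : ℕ → ℝ) : Monotone (F.staircases o) := fun _ _ hyy =>
  (F.summable_staircase o _).tsum_le_tsum (fun j => monotone_staircase (F.height_nonneg j) hyy)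
    (F.summable_staircase o _)

lemma staircases_nonneg (o : ℕ → ℝ) (y : ℝ) : 0 ≤ F.staircases o y :=
  tsum_nonneg fun j => staircase_nonneg (F.height_nonneg j)

lemma staircases_le (o : ℕ → ℝ) (y : ℝ) : F.staircases o y ≤ 1 / 2 :=
  hasSum_le (fun j => (staircase_le (F.height_nonneg j)).trans (F.weight_le j))
    (F.summable_staircase o y).hasSum hasSum_half_pow_add_two

lemma density_eq_sub :
    F.density = ((Ici (-1)).indicator (fun _ => 1 - ∑' j, F.mass j) +
        F.staircases fun j => (1 / 2) ^ (j + 1)) -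
      ((Ici 0).indicator (fun _ => 1 - ∑' j, F.mass j) +
        F.staircases fun j => (1 / 2) ^ (j + 1) + F.width j) := by
  ext y
  rw [Pi.sub_apply, Pi.add_apply, Pi.add_apply, add_sub_add_comm, ← Pi.sub_apply,
    ← indicator_sdiff (Ici_subset_Ici.2 (by norm_num)), Ici_sdiff_Ici, staircases, staircases,
    ← (F.summable_staircase _ y).tsum_sub (F.summable_staircase _ y), density]
  congr 1
  exact tsum_congr fun j => comb_eq_staircase_sub (F.width_pos j).le

lemma eVariationOn_density_le : eVariationOn F.density univ ≤ 3 := by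
  have hb := F.one_sub_tsum_mass_nonneg
  have hvar : ∀ (a : ℝ) (o : ℕ → ℝ), eVariationOn ((Ici a).indicator
      (fun _ => 1 - ∑' j, F.mass j) + F.staircases o) univ ≤ ENNReal.ofReal (3 / 2) := by
    intro a o
    refine ((monotone_indicator_Ici_const hb).add (F.monotone_staircases o)).eVariationOn_le
      (m := 0) (M := 3 / 2) (fun y => add_nonneg (indicator_nonneg (fun _ _ => hb) y)
        (F.staircases_nonneg o y)) (fun y => ?_) |>.trans_eq (by norm_num)
    have := indicator_le_self' (s := Ici a) (fun _ _ => hb) y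
    linarith [F.staircases_le o y, F.one_sub_tsum_mass_le_one]
  calc eVariationOn F.density univ ≤ ENNReal.ofReal (3 / 2) + ENNReal.ofReal (3 / 2) := by
        rw [density_eq_sub]
        exact (eVariationOn_sub_le _ _ _).trans (add_le_add (hvar _ _) (hvar _ _))
    _ = 3 := by rw [← ENNReal.ofReal_add (by norm_num) (by norm_num)]; norm_num

lemma natCast_mul_le_integral_abs_pcDensity_sub_density {N : ℕ} {x : Fin (N + 1) → ℝ}
    (hx : Monotone x) (j : ℕ) (hN : N * (F.height j * F.width j) ≤ 1) :
    F.C j * (F.height j * F.width j / 4) ≤ ∫ y, |pcDensity N x y - F.density y| := by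
  refine natCast_mul_le_integral_abs_pcDensity_sub_of_eqOn_comb hx (F.width_pos j) hN
    F.integrable_density fun y hy => F.density_eq_block_of_mem ⟨hy.1, hy.2.trans_le ?_⟩
  calc (1 / 2 : ℝ) ^ (j + 1) + (2 * F.C j + 1) * F.width j
      ≤ (1 / 2) ^ (j + 1) + (1 / 2) ^ (j + 1) := by linarith [F.span_le j]
    _ = (1 / 2) ^ j := by ring

end CombFamily

lemma exists_nat_mul_lt_and_mul_le {a : ℕ → ℝ} (ha_nonneg : ∀ n, 0 ≤ a n)
    (ha : Tendsto (fun n => a n * √n) atTop (𝓝 0)) {K ε : ℝ} (hK : 0 ≤ K) (hε : 0 < ε) (m : ℕ) :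
    ∃ n C : ℕ, m ≤ n ∧ 0 < n ∧ K * a n < C / (4 * n) ∧ (2 * C + 1) * (C + 1) ≤ n * ε := by
  have hsq : Tendsto (fun n : ℕ => a n ^ 2 * n) atTop (𝓝 0) := by
    simpa [mul_pow, Real.sq_sqrt (Nat.cast_nonneg _)] using ha.pow 2
  have hη : 0 < ε / (128 * (K ^ 2 + 1)) := by positivity
  obtain ⟨n, hn_small, hn_m, hn_big⟩ := ((hsq.eventually (gt_mem_nhds hη)).and
    ((eventually_ge_atTop m).and (eventually_gt_atTop ⌈32 / ε⌉₊))).exists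
  have hn : 32 ≤ n * ε := by
    have := (Nat.le_ceil (32 / ε)).trans_lt (Nat.cast_lt.2 hn_big)
    rw [div_lt_iff₀ hε] at this
    linarith
  have hn0 : (0 : ℝ) < n := by nlinarith
  -- `C = ⌊x⌋₊ + 1` exceeds `x`, and `(2 C + 1) (C + 1) ≤ 2 x² + 7 x + 6` with `x² ≤ n ε / 8`
  set x := 4 * K * n * a n
  have hx : 0 ≤ x := by have := ha_nonneg n; positivity
  have hx2 : x ^ 2 ≤ n * ε / 8 := by
    have hK : 16 * K ^ 2 * (ε / (128 * (K ^ 2 + 1))) ≤ ε / 8 := by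
      rw [mul_div_assoc', div_le_div_iff₀ (by positivity) (by norm_num)]
      nlinarith
    calc x ^ 2 = 16 * K ^ 2 * n * (a n ^ 2 * n) := by ring
      _ ≤ 16 * K ^ 2 * n * (ε / (128 * (K ^ 2 + 1))) := by gcongr
      _ ≤ n * ε / 8 := by nlinarith
  refine ⟨n, ⌊x⌋₊ + 1, hn_m, by exact_mod_cast hn0, ?_, ?_⟩
  · rw [lt_div_iff₀ (by positivity)]
    have := Nat.lt_floor_add_one x
    push_cast
    linarith
  · have hC : ((⌊x⌋₊ + 1 : ℕ) : ℝ) ≤ x + 1 := by push_cast; linarith [Nat.floor_le hx]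
    calc (2 * ((⌊x⌋₊ + 1 : ℕ) : ℝ) + 1) * (((⌊x⌋₊ + 1 : ℕ) : ℝ) + 1)
        ≤ (2 * (x + 1) + 1) * (x + 1 + 1) := by gcongr
      _ ≤ n * ε := by nlinarith [sq_nonneg (x - 7 / 2)]

lemma exists_combFamily {a : ℕ → ℝ} (ha_nonneg : ∀ n, 0 ≤ a n)
    (ha : Tendsto (fun n => a n * √n) atTop (𝓝 0)) :
    ∃ (F : CombFamily) (n : ℕ → ℕ), ∀ j, j ≤ n j ∧ n j * (F.height j * F.width j) ≤ 1 ∧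
      j * a (n j) < F.C j * (F.height j * F.width j / 4) := by
  choose n C hn_ge hn_pos hrate hfit using fun j : ℕ =>
    exists_nat_mul_lt_and_mul_le ha_nonneg ha (K := j) (ε := (1 / 2) ^ (j + 1) * (1 / 2) ^ (j + 2))
      j.cast_nonneg (by positivity) j
  have hn (j : ℕ) : (0 : ℝ) < n j := Nat.cast_pos.2 (hn_pos j)
  let width : ℕ → ℝ := fun j => (1 / 2) ^ (j + 1) / (2 * C j + 1)
  have hwidth (j : ℕ) : 0 < width j := by positivity
  let F : CombFamily :=
    { C, width
      height := fun j => 1 / (n j * width j)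
      width_pos := hwidth
      height_nonneg := fun j => by have := hn j; have := hwidth j; positivity
      span_le := fun j => (mul_div_cancel₀ _ (by positivity)).le
      weight_le := fun j => by
        have := hn j
        rw [mul_one_div, div_le_iff₀ (by positivity), ← mul_div_assoc, mul_div_assoc',
          le_div_iff₀ (by positivity)]
        linarith [hfit j] }
  have hhw (j : ℕ) : F.height j * F.width j = 1 / n j := by
    show 1 / (n j * width j) * width j = 1 / n j
    field_simp [(hwidth j).ne']
  exact ⟨F, n, fun j => ⟨hn_ge j, by rw [hhw, mul_one_div_cancel (hn j).ne'],
    (hrate j).trans_eq (by rw [hhw]; ring)⟩⟩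

/-- Sharpness of the `N^{-1/2}` rate: for any positive sequence `a_N = o(N^{-1/2})`
there is a probability density `ρ₀ ≤ 1` supported in `[-1,1]` with `TV(ρ₀) ≤ 3`
such that no sequence of sorted particle approximations converges at rate `a_N`:
`limsup ‖ρ̄^N − ρ₀‖_{L¹}/a_N = ∞`. -/
theorem stmt_15
    (a : ℕ → ℝ) (ha_pos : ∀ N, 0 < a N)
    (ha_o : Tendsto (fun N => a N * Real.sqrt N) atTop (nhds 0)) :
    ∃ ρ₀ : ℝ → ℝ, Measurable ρ₀ ∧ (∀ y, 0 ≤ ρ₀ y) ∧ (∀ y, ρ₀ y ≤ 1) ∧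
      (∫ y, ρ₀ y) = 1 ∧ Function.support ρ₀ ⊆ Set.Icc (-1 : ℝ) 1 ∧
      eVariationOn ρ₀ Set.univ ≤ 3 ∧
      ∀ X : (N : ℕ) → (Fin (N + 1) → ℝ), (∀ N, Monotone (X N)) →
        ∀ M : ℝ, ∃ᶠ N in atTop,
          M < (∫ y, |pcDensity N (X N) y - ρ₀ y|) / a N := by
  obtain ⟨F, n, hn⟩ := exists_combFamily (fun N => (ha_pos N).le) ha_o
  refine ⟨F.density, F.measurable_density, F.density_nonneg, F.density_le_one, F.integral_density,
    F.support_density_subset, F.eVariationOn_density_le, fun X hX M => ?_⟩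
  refine frequently_atTop.2 fun N₀ => ?_
  set j := max N₀ ⌈M⌉₊
  obtain ⟨hj_le, hN, hrate⟩ := hn j
  refine ⟨n j, (le_max_left _ _).trans hj_le, ?_⟩
  rw [lt_div_iff₀ (ha_pos _)]
  calc M * a (n j) ≤ j * a (n j) :=
        mul_le_mul_of_nonneg_right ((Nat.le_ceil M).trans (by exact_mod_cast le_max_right _ _))
          (ha_pos _).le
    _ < F.C j * (F.height j * F.width j / 4) := hrate
    _ ≤ ∫ y, |pcDensity (n j) (X (n j)) y - F.density y| :=
        F.natCast_mul_le_integral_abs_pcDensity_sub_density (hX _) j hN
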